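/- Let Ω be a probability space partitioned into sets Ω_1, Ω_2, … with μ(Ω_i) = 2^{-i}. Fix γ > 0 and a bounded sequence a = (a_i). Define W_{γ,a}(x,y) = 2^{iγ}·a_i if (x,y) ∈ Ω_i × Ω_i and 0 otherwise. Then for any connected graph F with m ≥ 1 edges and average degree 2/γ (i.e. v(F) = γ·m), one has t(F, |W_{γ,a}|) = ∑_i |a_i|^m = ‖a‖_m^m. -/

import Mathlib

/-!
By connectedness of `F`, the integrand vanishes unless all coordinates lie in a single block
`A i`, where every edge contributes `2^{(i+1)γ} |a i|`. That event has measure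
`2^{-(i+1) v(F)} = 2^{-(i+1)γm}`, which cancels the scale factor `2^{(i+1)γm}` exactly.
-/

open MeasureTheory

noncomputable def sym2ValNN {V Ω : Type*} (W : Ω → Ω → ENNReal) (x : V → Ω) :
    Sym2 V → ENNReal :=
  Sym2.lift ⟨fun i j => (W (x i) (x j) + W (x j) (x i)) / 2, fun i j => by simp [add_comm]⟩

open Set

namespace SimpleGraph

theorem Reachable.eq_of_forall_adj {V β : Type*} {G : SimpleGraph V} {f : V → β}
    (hf : ∀ u v, G.Adj u v → f u = f v) {u v : V} (h : G.Reachable u v) : f u = f v := by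
  obtain ⟨p⟩ := h
  induction p with
  | nil => rfl
  | cons hadj _ ih => exact (hf _ _ hadj).trans ih

end SimpleGraph

theorem sym2ValNN_mk_of_symm {V Ω : Type*} {K : Ω → Ω → ENNReal} (hK : ∀ x y, K x y = K y x)
    (x : V → Ω) (u v : V) : sym2ValNN K x s(u, v) = K (x u) (x v) := by
  change (K (x u) (x v) + K (x v) (x u)) / 2 = _
  rw [hK (x v), ← two_mul, mul_div_assoc, ENNReal.mul_div_cancel two_ne_zero ENNReal.ofNat_ne_top]

theorem two_rpow_mul_pow_mul_half_pow {γ : ℝ} {m n : ℕ} (hdeg : (n : ℝ) = γ * m) (k : ℕ) :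
    ((2 : ℝ) ^ ((k : ℝ) * γ)) ^ m * ((1 / 2 : ℝ) ^ k) ^ n = 1 := by
  have hexp : (k : ℝ) * γ * m = ((k * n : ℕ) : ℝ) := by push_cast; rw [hdeg]; ring
  rw [← Real.rpow_natCast _ m, ← Real.rpow_mul zero_le_two, hexp, Real.rpow_natCast, ← pow_mul,
    one_div, inv_pow, mul_inv_cancel₀ (by positivity)]

structure IsBlockKernel {Ω ι : Type*} (A : ι → Set Ω) (c : ι → ENNReal) (K : Ω → Ω → ENNReal) :
    Prop where
  apply_of_mem : ∀ i x y, x ∈ A i → y ∈ A i → K x y = c i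
  apply_of_not_mem : ∀ x y, (¬ ∃ i, x ∈ A i ∧ y ∈ A i) → K x y = 0

namespace IsBlockKernel

variable {Ω ι V : Type*} {A : ι → Set Ω} {c : ι → ENNReal} {K : Ω → Ω → ENNReal}

theorem symm (hK : IsBlockKernel A c K) (x y : Ω) : K x y = K y x := by
  by_cases h : ∃ i, x ∈ A i ∧ y ∈ A i
  · obtain ⟨i, hx, hy⟩ := h
    rw [hK.apply_of_mem i x y hx hy, hK.apply_of_mem i y x hy hx]
  · rw [hK.apply_of_not_mem x y h, hK.apply_of_not_mem y x fun ⟨i, hy, hx⟩ => h ⟨i, hx, hy⟩]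

theorem finprod_sym2ValNN_of_forall_mem [Finite V] (hK : IsBlockKernel A c K)
    (F : SimpleGraph V) {x : V → Ω} {i : ι} (hx : ∀ v, x v ∈ A i) :
    ∏ᶠ e ∈ F.edgeSet, sym2ValNN K x e = c i ^ F.edgeSet.ncard := by
  have : Fintype V := Fintype.ofFinite V
  classical
  have hconst : ∀ e ∈ F.edgeSet, sym2ValNN K x e = c i := by
    intro e _
    induction e with
    | h u v => rw [sym2ValNN_mk_of_symm hK.symm, hK.apply_of_mem i _ _ (hx u) (hx v)]
  rw [finprod_mem_congr rfl hconst, ← F.coe_edgeFinset, finprod_mem_coe_finset,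
    Finset.prod_const, Set.ncard_coe_finset]

/-- On a connected graph, a configuration not lying in a single block has an edge whose
endpoints lie in different blocks. -/
theorem finprod_sym2ValNN_eq_zero [Finite V] (hK : IsBlockKernel A c K)
    (hdisj : Pairwise (Function.onFun Disjoint A)) (hcover : ⋃ i, A i = univ)
    {F : SimpleGraph V} (hconn : F.Connected) {x : V → Ω} (hx : ¬ ∃ i, ∀ v, x v ∈ A i) :
    ∏ᶠ e ∈ F.edgeSet, sym2ValNN K x e = 0 := by
  have : Fintype V := Fintype.ofFinite V
  classical
  obtain ⟨u, v, hadj, hsplit⟩ : ∃ u v, F.Adj u v ∧ ¬ ∃ i, x u ∈ A i ∧ x v ∈ A i := by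
    by_contra! hall
    obtain ⟨v₀⟩ := hconn.nonempty
    obtain ⟨i, hi⟩ := mem_iUnion.mp (hcover ▸ mem_univ (x v₀))
    have hstep : ∀ u v, F.Adj u v → (x u ∈ A i) = (x v ∈ A i) := by
      intro u v huv
      obtain ⟨j, hu, hv⟩ := hall u v huv
      refine propext ⟨fun hu' => ?_, fun hv' => ?_⟩
      · rwa [hdisj.eq (not_disjoint_iff.mpr ⟨_, hu', hu⟩)]
      · rwa [hdisj.eq (not_disjoint_iff.mpr ⟨_, hv', hv⟩)]
    exact hx ⟨i, fun v => (hconn v₀ v).eq_of_forall_adj hstep ▸ hi⟩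
  rw [← F.coe_edgeFinset, finprod_mem_coe_finset]
  refine Finset.prod_eq_zero (F.mem_edgeFinset.mpr (F.mem_edgeSet.mpr hadj)) ?_
  rw [sym2ValNN_mk_of_symm hK.symm, hK.apply_of_not_mem _ _ hsplit]

theorem finprod_sym2ValNN_eq_tsum_indicator [Finite V] (hK : IsBlockKernel A c K)
    (hdisj : Pairwise (Function.onFun Disjoint A)) (hcover : ⋃ i, A i = univ)
    {F : SimpleGraph V} (hconn : F.Connected) (x : V → Ω) :
    ∏ᶠ e ∈ F.edgeSet, sym2ValNN K x e
      = ∑' i, (univ.pi fun _ : V => A i).indicator (fun _ => c i ^ F.edgeSet.ncard) x := by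
  by_cases hx : ∃ i, ∀ v, x v ∈ A i
  · obtain ⟨i, hi⟩ := hx
    obtain ⟨v₀⟩ := hconn.nonempty
    rw [hK.finprod_sym2ValNN_of_forall_mem F hi, tsum_eq_single i fun j hj => ?_,
      indicator_of_mem (mem_univ_pi.mpr hi)]
    exact indicator_of_notMem (fun hj' => hj (hdisj.eq
      (not_disjoint_iff.mpr ⟨_, mem_univ_pi.mp hj' v₀, hi v₀⟩))) _
  · rw [hK.finprod_sym2ValNN_eq_zero hdisj hcover hconn hx, eq_comm,
      ENNReal.tsum_eq_zero]
    exact fun i => indicator_of_notMem (fun hi => hx ⟨i, mem_univ_pi.mp hi⟩) _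

theorem lintegral_finprod_sym2ValNN [MeasurableSpace Ω] [Countable ι] [Fintype V]
    (μ : Measure Ω) [SigmaFinite μ] (hK : IsBlockKernel A c K) (hmeas : ∀ i, MeasurableSet (A i))
    (hdisj : Pairwise (Function.onFun Disjoint A)) (hcover : ⋃ i, A i = univ)
    {F : SimpleGraph V} (hconn : F.Connected) :
    ∫⁻ x : V → Ω, ∏ᶠ e ∈ F.edgeSet, sym2ValNN K x e ∂(Measure.pi fun _ => μ)
      = ∑' i, c i ^ F.edgeSet.ncard * μ (A i) ^ Fintype.card V := by
  have hpi : ∀ i, MeasurableSet (univ.pi fun _ : V => A i) :=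
    fun i => MeasurableSet.univ_pi fun _ => hmeas i
  simp_rw [hK.finprod_sym2ValNN_eq_tsum_indicator hdisj hcover hconn]
  rw [lintegral_tsum fun i => (measurable_const.indicator (hpi i)).aemeasurable]
  refine tsum_congr fun i => ?_
  rw [lintegral_indicator_const (hpi i), Measure.pi_pi, Finset.prod_const, Finset.card_univ]

end IsBlockKernel

theorem density_block_kernel_general {Ω : Type} [MeasurableSpace Ω] (μ : Measure Ω)
    [IsProbabilityMeasure μ]
    (A : ℕ → Set Ω) (hmeas : ∀ i, MeasurableSet (A i))
    (hdisj : Pairwise (Function.onFun Disjoint A))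
    (hcover : (⋃ i, A i) = Set.univ)
    (hμ : ∀ i, μ (A i) = ENNReal.ofReal ((1 / 2 : ℝ) ^ (i + 1)))
    (γ : ℝ) (a : ℕ → ℝ)
    (W : Ω → Ω → ℝ)
    (hWval : ∀ i x y, x ∈ A i → y ∈ A i → W x y = 2 ^ (((i : ℝ) + 1) * γ) * a i)
    (hWzero : ∀ x y, (¬ ∃ i, x ∈ A i ∧ y ∈ A i) → W x y = 0)
    {V : Type} [Fintype V] (F : SimpleGraph V) (hconn : F.Connected)
    (m : ℕ) (hm : m = F.edgeSet.ncard)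
    (hdeg : (Fintype.card V : ℝ) = γ * m) :
    ∫⁻ x : V → Ω, ∏ᶠ e ∈ F.edgeSet, sym2ValNN (fun u v => ENNReal.ofReal |W u v|) x e
        ∂(Measure.pi fun _ => μ)
      = ∑' i, ENNReal.ofReal (|a i| ^ m) := by
  have hK : IsBlockKernel A (fun i => ENNReal.ofReal (2 ^ (((i : ℝ) + 1) * γ) * |a i|))
      (fun u v => ENNReal.ofReal |W u v|) :=
    ⟨fun i x y hx hy => by
      rw [hWval i x y hx hy, abs_mul, abs_of_pos (by positivity)],
     fun x y h => by rw [hWzero x y h, abs_zero, ENNReal.ofReal_zero]⟩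
  rw [hK.lintegral_finprod_sym2ValNN μ hmeas hdisj hcover hconn, ← hm]
  refine tsum_congr fun i => ?_
  have hscale := two_rpow_mul_pow_mul_half_pow hdeg (i + 1)
  push_cast at hscale
  rw [hμ, ← ENNReal.ofReal_pow (by positivity), ← ENNReal.ofReal_pow (by positivity),
    ← ENNReal.ofReal_mul (by positivity), mul_pow]
  congr 1
  linear_combination |a i| ^ m * hscale

/-- Let `Ω` be a probability space partitioned into sets `A 0, A 1, …` with
`μ (A i) = 2^{-(i+1)}`.  Fix `γ > 0` and a bounded sequence `a`, and let `W` be the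
kernel equal to `2^{(i+1)γ} · a i` on `A i × A i` and `0` elsewhere.  Then for any
connected graph `F` with `m ≥ 1` edges and average degree `2/γ` (i.e. `v(F) = γ·m`),
`t(F, |W|) = ∑ i, |a i| ^ m = ‖a‖_m ^ m` (as an identity in `[0, ∞]`). -/
theorem density_block_kernel {Ω : Type} [MeasurableSpace Ω] (μ : Measure Ω)
    [IsProbabilityMeasure μ]
    (A : ℕ → Set Ω) (hmeas : ∀ i, MeasurableSet (A i))
    (hdisj : Pairwise (Function.onFun Disjoint A))
    (hcover : (⋃ i, A i) = Set.univ)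
    (hμ : ∀ i, μ (A i) = ENNReal.ofReal ((1 / 2 : ℝ) ^ (i + 1)))
    (γ : ℝ) (hγ : 0 < γ) (a : ℕ → ℝ) (C : ℝ) (ha : ∀ i, |a i| ≤ C)
    (W : Ω → Ω → ℝ) (hWmeas : Measurable (Function.uncurry W))
    (hWval : ∀ i x y, x ∈ A i → y ∈ A i → W x y = 2 ^ (((i : ℝ) + 1) * γ) * a i)
    (hWzero : ∀ x y, (¬ ∃ i, x ∈ A i ∧ y ∈ A i) → W x y = 0)
    {V : Type} [Fintype V] (F : SimpleGraph V) (hconn : F.Connected)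
    (m : ℕ) (hm : m = F.edgeSet.ncard) (hm1 : 1 ≤ m)
    (hdeg : (Fintype.card V : ℝ) = γ * m) :
    ∫⁻ x : V → Ω, ∏ᶠ e ∈ F.edgeSet, sym2ValNN (fun u v => ENNReal.ofReal |W u v|) x e
        ∂(Measure.pi fun _ => μ)
      = ∑' i, ENNReal.ofReal (|a i| ^ m) :=
  density_block_kernel_general μ A hmeas hdisj hcover hμ γ a W hWval hWzero F hconn m hm hdeg
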